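/- arXiv:2210.15841 — 5 statements merged into one kernel-verified Lean document; each statement's English description precedes it below -/
import Mathlib

section
/- For fixed Δ > 0, the function γ ↦ α(γ,Δ) := (1 − e^{−Δγ})/(e^{Δγ} − e^{−Δγ}) is convex on (0, ∞). -/
/-!
Cancelling the factor `e^x - 1` shows `α(γ, Δ) = 1 / (1 + e^{Δγ}) = σ(-Δγ) = 1 - σ(Δγ)`,
where `σ` is the logistic sigmoid. Since `σ'' = σ (1 - σ) (1 - 2σ)` and `σ ≥ 1/2` on `[0, ∞)`,
the sigmoid is concave there, so `α` is convex on `(0, ∞)`.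
-/

open Real Set

lemma hasDerivAt_deriv_sigmoid (x : ℝ) :
    HasDerivAt (fun y => sigmoid y * (1 - sigmoid y))
      (sigmoid x * (1 - sigmoid x) * (1 - 2 * sigmoid x)) x :=
  ((hasDerivAt_sigmoid x).mul ((hasDerivAt_sigmoid x).const_sub 1)).congr_deriv (by ring)

lemma concaveOn_sigmoid_Ici : ConcaveOn ℝ (Ici 0) sigmoid := by
  refine concaveOn_of_hasDerivWithinAt2_nonpos (convex_Ici 0) continuous_sigmoid.continuousOn
    (fun x _ => (hasDerivAt_sigmoid x).hasDerivWithinAt)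
    (fun x _ => (hasDerivAt_deriv_sigmoid x).hasDerivWithinAt) fun x hx => ?_
  rw [interior_Ici] at hx
  have half_le : 2⁻¹ ≤ sigmoid x := sigmoid_zero ▸ sigmoid_le hx.le
  have := sigmoid_pos x
  have := sigmoid_lt_one x
  exact mul_nonpos_of_nonneg_of_nonpos (by nlinarith) (by linarith)

lemma convexOn_sigmoid_neg_Ici : ConvexOn ℝ (Ici 0) fun x => sigmoid (-x) :=
  (concaveOn_sigmoid_Ici.neg.add_const 1).congr fun x _ => by
    simp only [Pi.add_apply, Pi.neg_apply, sigmoid_neg]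
    ring

lemma one_sub_exp_neg_div_exp_sub_exp_neg {x : ℝ} (hx : x ≠ 0) :
    (1 - exp (-x)) / (exp x - exp (-x)) = sigmoid (-x) := by
  have exp_sub_one_ne : exp x - 1 ≠ 0 := by simpa [sub_eq_zero] using hx
  have factor : exp x - (exp x)⁻¹ = (exp x - 1) * (exp x + 1) / exp x := by field_simp; ring
  rw [sigmoid_def, neg_neg, exp_neg, factor]
  field_simp
  ring

/-- For fixed `Δ > 0`, the map
`γ ↦ α(γ,Δ) = (1 - e^{-Δγ})/(e^{Δγ} - e^{-Δγ})` is convex on `(0, ∞)`. -/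
theorem alpha_convex_in_gamma (Δ : ℝ) (hΔ : 0 < Δ) :
    ConvexOn ℝ (Set.Ioi (0 : ℝ))
      (fun γ : ℝ =>
        (1 - Real.exp (-(Δ * γ))) / (Real.exp (Δ * γ) - Real.exp (-(Δ * γ)))) := by
  have scaled : ConvexOn ℝ (Ioi 0) fun γ => sigmoid (-(Δ * γ)) :=
    (convexOn_sigmoid_neg_Ici.comp_linearMap (Δ • LinearMap.id)).subset
      (fun γ hγ => (mul_pos hΔ hγ).le) (convex_Ioi 0)
  exact scaled.congr fun γ hγ => (one_sub_exp_neg_div_exp_sub_exp_neg (mul_pos hΔ hγ).ne').symm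
end

section
/- The function α ↦ (1 − 2α)/ln((1−α)/α) is concave on (0, 1/2). -/
/-!
Write `ℓ(α) = log ((1 - α) / α)`, so that `ℓ' = -1 / (α (1 - α))`. Differentiating
`(1 - 2α) / ℓ` twice and using `(1 - 2α)² + 4α(1 - α) = 1` gives the second derivative
`(2 (1 - 2α) - ℓ) / ((α (1 - α))² ℓ³)`. On `(0, 1/2)` we have `ℓ > 0`, and `ℓ ≥ 2 (1 - 2α)` is
the first term of the series `ℓ = ∑ 2 (1 - 2α)^(2k+1) / (2k + 1)`, so the second derivative is `≤ 0`.
-/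

open Real Set

lemma concaveOn_of_hasDerivAt2_nonpos_of_isOpen {D : Set ℝ} (hD : Convex ℝ D) (hDo : IsOpen D)
    {f f' f'' : ℝ → ℝ} (hf' : ∀ x ∈ D, HasDerivAt f (f' x) x)
    (hf'' : ∀ x ∈ D, HasDerivAt f' (f'' x) x) (hf''₀ : ∀ x ∈ D, f'' x ≤ 0) :
    ConcaveOn ℝ D f := by
  refine concaveOn_of_hasDerivWithinAt2_nonpos (f' := f') (f'' := f'') hD
    (fun x hx ↦ (hf' x hx).continuousAt.continuousWithinAt) ?_ ?_ ?_ <;> rw [hDo.interior_eq]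
  · exact fun x hx ↦ (hf' x hx).hasDerivWithinAt
  · exact fun x hx ↦ (hf'' x hx).hasDerivWithinAt
  · exact hf''₀

noncomputable def logOdds (x : ℝ) : ℝ := log ((1 - x) / x)

section logOdds

variable {x : ℝ}

lemma two_mul_one_sub_two_mul_le_logOdds (hx0 : 0 < x) (hx : x < 1 / 2) :
    2 * (1 - 2 * x) ≤ logOdds x := by
  have h2x : 0 < 1 - 2 * x := by linarith
  have hsum := hasSum_log_one_add_inv (div_pos hx0 h2x)
  have hinv : 1 / (2 * (x / (1 - 2 * x)) + 1) = 1 - 2 * x := by field_simp; ring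
  have hlog : 1 + (x / (1 - 2 * x))⁻¹ = (1 - x) / x := by field_simp; ring
  rw [hinv, hlog] at hsum
  simpa [logOdds] using le_hasSum hsum 0 fun k _ ↦ by positivity

lemma logOdds_pos (hx0 : 0 < x) (hx : x < 1 / 2) : 0 < logOdds x :=
  lt_of_lt_of_le (by linarith) (two_mul_one_sub_two_mul_le_logOdds hx0 hx)

lemma hasDerivAt_logOdds (hx0 : 0 < x) (hx1 : x < 1) :
    HasDerivAt logOdds (-(x * (1 - x))⁻¹) x := by
  have h1x : 0 < 1 - x := by linarith
  have hdiv := ((hasDerivAt_id' x).const_sub 1).fun_div (hasDerivAt_id' x) hx0.ne'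
  refine (hdiv.log (div_pos h1x hx0).ne').congr_deriv ?_
  field_simp
  ring

lemma hasDerivAt_one_sub_two_mul_div_logOdds (hx0 : 0 < x) (hx1 : x < 1) (hL : logOdds x ≠ 0) :
    HasDerivAt (fun z ↦ (1 - 2 * z) / logOdds z)
      ((-2 * logOdds x + (1 - 2 * x) / (x * (1 - x))) / logOdds x ^ 2) x := by
  have hN : HasDerivAt (fun z : ℝ ↦ 1 - 2 * z) (-2) x := by
    simpa using ((hasDerivAt_id x).const_mul 2).const_sub 1
  refine (hN.fun_div (hasDerivAt_logOdds hx0 hx1) hL).congr_deriv ?_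
  field_simp
  ring

lemma hasDerivAt2_one_sub_two_mul_div_logOdds (hx0 : 0 < x) (hx1 : x < 1) (hL : logOdds x ≠ 0) :
    HasDerivAt (fun z ↦ (-2 * logOdds z + (1 - 2 * z) / (z * (1 - z))) / logOdds z ^ 2)
      ((2 * (1 - 2 * x) - logOdds x) / ((x * (1 - x)) ^ 2 * logOdds x ^ 3)) x := by
  have h1x : 1 - x ≠ 0 := by linarith
  have hq : x * (1 - x) ≠ 0 := mul_ne_zero hx0.ne' h1x
  have hL' := hasDerivAt_logOdds hx0 hx1
  have hN : HasDerivAt (fun z : ℝ ↦ 1 - 2 * z) (-2) x := by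
    simpa using ((hasDerivAt_id x).const_mul 2).const_sub 1
  have hQ : HasDerivAt (fun z : ℝ ↦ z * (1 - z)) (1 - 2 * x) x := by
    refine ((hasDerivAt_id' x).fun_mul ((hasDerivAt_id' x).const_sub 1)).congr_deriv ?_
    ring
  refine (((hL'.const_mul (-2)).fun_add (hN.fun_div hQ hq)).fun_div (hL'.fun_pow 2)
    (pow_ne_zero 2 hL)).congr_deriv ?_
  field_simp
  ring

end logOdds

/-- The function `α ↦ (1 - 2α)/ln((1-α)/α)` is concave on `(0, 1/2)`. -/
theorem h_concave :
    ConcaveOn ℝ (Set.Ioo (0 : ℝ) (1 / 2))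
      (fun α : ℝ => (1 - 2 * α) / Real.log ((1 - α) / α)) := by
  refine concaveOn_of_hasDerivAt2_nonpos_of_isOpen (convex_Ioo _ _) isOpen_Ioo
    (fun x ⟨hx0, hx⟩ ↦ hasDerivAt_one_sub_two_mul_div_logOdds hx0 (by linarith)
      (logOdds_pos hx0 hx).ne')
    (fun x ⟨hx0, hx⟩ ↦ hasDerivAt2_one_sub_two_mul_div_logOdds hx0 (by linarith)
      (logOdds_pos hx0 hx).ne')
    fun x ⟨hx0, hx⟩ ↦ div_nonpos_of_nonpos_of_nonneg ?_ ?_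
  · linarith [two_mul_one_sub_two_mul_le_logOdds hx0 hx]
  · have := logOdds_pos hx0 hx
    positivity
end

section
/- Define R(γ, Δ) = Δ·(1 − e^{−Δγ})/(e^{Δγ} − e^{−Δγ}) + (2γ/Δ)·(e^{Δγ} + e^{−Δγ} − 2)/(e^{Δγ} − e^{−Δγ}) for γ, Δ > 0. For every fixed γ ≥ 0 (with R(0, Δ) := Δ/2), the map Δ ↦ R(γ, Δ) is quasi-concave on (0, ∞), i.e., for every ν ∈ ℝ the superlevel set {Δ > 0 : R(γ, Δ) ≥ ν} is convex. -/
/-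
Put `t = γΔ`. Then `∂R/∂Δ` has the sign of `φ(t) = t² (1 + e⁻ᵗ - t) - 4γ³ (sinh t - t)`.
If `φ(v) ≥ 0` then `1 + e⁻ᵛ ≥ v`, so `v ≤ 13/10`, and on `(0, 13/10]` the ratio
`t² (1 + e⁻ᵗ - t) / (sinh t - t)` is decreasing; hence `φ ≥ 0` on `(0, v]`. So `φ` changes sign at
most once, from `+` to `-`, and `R(γ, ·)` first increases and then decreases. That the ratio
decreases reduces to a cubic inequality in `e⁻ᵗ`, which follows from the Taylor bounds of degree 3
and 4 for `e⁻ᵗ`.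
-/

/-- The regret function `R(γ,Δ)` (with cost parameter `η = 1`), extended to `γ = 0`
by its limit `R(0, Δ) = Δ/2`. -/
noncomputable def regretR (γ Δ : ℝ) : ℝ :=
  if γ = 0 then Δ / 2
  else
    Δ * (1 - Real.exp (-(Δ * γ))) / (Real.exp (Δ * γ) - Real.exp (-(Δ * γ))) +
      2 * γ / Δ * ((Real.exp (Δ * γ) + Real.exp (-(Δ * γ)) - 2) /
        (Real.exp (Δ * γ) - Real.exp (-(Δ * γ))))

open Real Set

lemma hasDerivAt_sum_range_neg_pow_div_factorial (n : ℕ) (x : ℝ) :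
    HasDerivAt (fun y : ℝ => ∑ k ∈ Finset.range (n + 1), (-y) ^ k / k.factorial)
      (-∑ k ∈ Finset.range n, (-x) ^ k / k.factorial) x := by
  induction n with
  | zero => simpa using hasDerivAt_const x (1 : ℝ)
  | succ n ih =>
    simp only [Finset.sum_range_succ _ (n + 1)]
    have hterm : HasDerivAt (fun y : ℝ => (-y) ^ (n + 1) / (n + 1).factorial)
        (-((-x) ^ n / n.factorial)) x := by
      refine ((((hasDerivAt_id x).neg).pow (n + 1)).div_const _).congr_deriv ?_
      rw [Nat.factorial_succ]
      push_cast
      field_simp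
      simp
    refine (ih.add hterm).congr_deriv ?_
    rw [Finset.sum_range_succ]
    ring

lemma neg_one_pow_mul_exp_neg_sub_sum_nonneg (n : ℕ) {x : ℝ} (hx : 0 ≤ x) :
    0 ≤ (-1) ^ n * (exp (-x) - ∑ k ∈ Finset.range n, (-x) ^ k / k.factorial) := by
  induction n generalizing x with
  | zero => simpa using (exp_pos _).le
  | succ n ih =>
    set F : ℝ → ℝ := fun y =>
      (-1) ^ (n + 1) * (exp (-y) - ∑ k ∈ Finset.range (n + 1), (-y) ^ k / k.factorial)
    have hF (y : ℝ) :
        HasDerivAt F ((-1) ^ n * (exp (-y) - ∑ k ∈ Finset.range n, (-y) ^ k / k.factorial)) y :=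
      ((((hasDerivAt_neg y).exp).sub (hasDerivAt_sum_range_neg_pow_div_factorial n y)).const_mul
        _).congr_deriv (by ring)
    have hmono : MonotoneOn F (Ici 0) :=
      monotoneOn_of_hasDerivWithinAt_nonneg (convex_Ici 0)
        (fun y _ => (hF y).continuousAt.continuousWithinAt) (fun y _ => (hF y).hasDerivWithinAt)
        (fun y hy => ih (interior_subset hy))
    have hF0 : F 0 = 0 := by simp [F, Finset.sum_range_succ']
    simpa [hF0] using hmono self_mem_Ici hx hx

lemma quasiconcaveOn_of_hasDerivAt_of_nonneg_of_le {D : Set ℝ} (hD : Convex ℝ D) {f f' : ℝ → ℝ}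
    (hf : ∀ x ∈ D, HasDerivAt f (f' x) x)
    (hf' : ∀ x ∈ D, ∀ y ∈ D, x ≤ y → 0 ≤ f' y → 0 ≤ f' x) :
    QuasiconcaveOn ℝ D f := by
  intro r
  refine OrdConnected.convex ⟨?_⟩
  rintro x ⟨hxD, hxr⟩ y ⟨hyD, hyr⟩ z ⟨hxz, hzy⟩
  have hsub {a b : ℝ} (ha : a ∈ D) (hb : b ∈ D) : Icc a b ⊆ D := hD.ordConnected.out ha hb
  have hcont {a b : ℝ} (ha : a ∈ D) (hb : b ∈ D) : ContinuousOn f (Icc a b) := fun t ht =>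
    (hf t (hsub ha hb ht)).continuousAt.continuousWithinAt
  have hzD : z ∈ D := hsub hxD hyD ⟨hxz, hzy⟩
  refine ⟨hzD, ?_⟩
  by_cases hz : 0 ≤ f' z
  · have hmono : MonotoneOn f (Icc x z) := by
      refine monotoneOn_of_hasDerivWithinAt_nonneg (convex_Icc x z) (hcont hxD hzD)
        (fun t ht => (hf t (hsub hxD hzD (interior_subset ht))).hasDerivWithinAt) fun t ht => ?_
      rw [interior_Icc] at ht
      exact hf' t (hsub hxD hzD (Ioo_subset_Icc_self ht)) z hzD ht.2.le hz
    exact hxr.trans (hmono (left_mem_Icc.2 hxz) (right_mem_Icc.2 hxz) hxz)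
  · have hanti : AntitoneOn f (Icc z y) := by
      refine antitoneOn_of_hasDerivWithinAt_nonpos (convex_Icc z y) (hcont hzD hyD)
        (fun t ht => (hf t (hsub hzD hyD (interior_subset ht))).hasDerivWithinAt) fun t ht => ?_
      rw [interior_Icc] at ht
      by_contra! ht'
      exact hz (hf' z hzD t (hsub hzD hyD (Ioo_subset_Icc_self ht)) ht.1.le ht'.le)
    exact hyr.trans (hanti (left_mem_Icc.2 hzy) (right_mem_Icc.2 hzy) hzy)

lemma cubic_nonneg_of_taylor_bounds {t b : ℝ} (ht0 : 0 < t) (ht : t ≤ 13 / 10)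
    (hlb : 1 - t + t ^ 2 / 2 - t ^ 3 / 6 ≤ b)
    (hub : b ≤ 1 - t + t ^ 2 / 2 - t ^ 3 / 6 + t ^ 4 / 24) :
    0 ≤ 2 * b ^ 3 + (2 - 3 * t ^ 2) * b ^ 2 + (4 * t - 4 * t ^ 2 - 2) * b +
      (4 * t - 2 - t ^ 2) := by
  obtain ⟨s, rfl⟩ : ∃ s, b = 1 - t + t ^ 2 / 2 - t ^ 3 / 6 + s := ⟨_, (add_sub_cancel _ b).symm⟩
  have hs0 : 0 ≤ s := by linarith
  have hs : s ≤ t ^ 4 / 24 := by linarith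
  have hQ : 0 ≤ 2/3 - 29/24*t + 5/6*t^2 - 5/18*t^3 + 1/12*t^4 - 1/288*t^5 - 1/108*t^6 := by
    nlinarith [sq_nonneg (t - 6/5), mul_nonneg ht0.le (sub_nonneg.2 ht),
      pow_le_pow_left₀ ht0.le ht 2, pow_le_pow_left₀ ht0.le ht 3, pow_le_pow_left₀ ht0.le ht 4,
      mul_nonneg (mul_nonneg ht0.le ht0.le) (sub_nonneg.2 ht), pow_nonneg ht0.le 3]
  have hA : -5 ≤ 8 - 12*t + 4*t^2 - 8/3*t^3 + 1/2*t^4 + 1/6*t^6 := by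
    nlinarith [sq_nonneg (t - 1), pow_pos ht0 3, pow_pos ht0 4, pow_pos ht0 6,
      mul_nonneg (sub_nonneg.2 ht) ht0.le]
  have hB : -2 ≤ 8 - 6*t - t^3 := by nlinarith [pow_pos ht0 2]
  -- The cubic equals `t³ Q + 5 (t⁴/24) + 2 (t⁴/24)² + A s + B s² + 2 s³`, with `Q`, `A`, `B` the
  -- polynomials bounded in `hQ`, `hA`, `hB`.
  linear_combination mul_nonneg (pow_nonneg ht0.le 3) hQ + mul_le_mul_of_nonneg_right hA hs0 +
    mul_le_mul_of_nonneg_right hB (sq_nonneg s) + 2 * pow_nonneg hs0 3 + 5 * hs +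
    2 * pow_le_pow_left₀ hs0 hs 2

lemma mul_sinh_sub_self_le_mul_cosh_sub_one {t : ℝ} (ht0 : 0 < t) (ht : t ≤ 13 / 10) :
    (2 * t + 2 * t * exp (-t) - t ^ 2 * exp (-t) - 3 * t ^ 2) * (sinh t - t) ≤
      t ^ 2 * (1 + exp (-t) - t) * (cosh t - 1) := by
  have h4 := neg_one_pow_mul_exp_neg_sub_sum_nonneg 4 ht0.le
  have h5 := neg_one_pow_mul_exp_neg_sub_sum_nonneg 5 ht0.le
  norm_num [Finset.sum_range_succ, Nat.factorial] at h4 h5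
  have hG := cubic_nonneg_of_taylor_bounds (b := exp (-t)) ht0 ht (by linarith) (by linarith)
  have hexp : exp t * exp (-t) = 1 := by rw [← exp_add, add_neg_cancel, exp_zero]
  have hid : 2 * exp (-t) * (t ^ 2 * (1 + exp (-t) - t) * (cosh t - 1) -
        (2 * t + 2 * t * exp (-t) - t ^ 2 * exp (-t) - 3 * t ^ 2) * (sinh t - t)) =
      t * (2 * exp (-t) ^ 3 + (2 - 3 * t ^ 2) * exp (-t) ^ 2 + (4 * t - 4 * t ^ 2 - 2) * exp (-t) +
        (4 * t - 2 - t ^ 2)) := by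
    rw [sinh_eq, cosh_eq]
    linear_combination (-2 * t + 4 * t ^ 2 - t ^ 3 - 2 * exp (-t) * t + 2 * exp (-t) * t ^ 2) * hexp
  have := mul_nonneg ht0.le hG
  rw [← hid] at this
  exact sub_nonneg.1 (nonneg_of_mul_nonneg_right this (by positivity))

lemma antitoneOn_div_sinh_sub_self :
    AntitoneOn (fun t => t ^ 2 * (1 + exp (-t) - t) / (sinh t - t)) (Ioc 0 (13 / 10)) := by
  have hA (t : ℝ) : HasDerivAt (fun t => t ^ 2 * (1 + exp (-t) - t))
      (2 * t + 2 * t * exp (-t) - t ^ 2 * exp (-t) - 3 * t ^ 2) t :=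
    ((hasDerivAt_pow 2 t).mul (((hasDerivAt_neg t).exp.const_add 1).sub
      (hasDerivAt_id t))).congr_deriv (by simp; ring)
  have hB (t : ℝ) : HasDerivAt (fun t => sinh t - t) (cosh t - 1) t :=
    (hasDerivAt_sinh t).sub (hasDerivAt_id t)
  have hdiv {t : ℝ} (ht : t ∈ Ioc (0 : ℝ) (13 / 10)) :=
    (hA t).div (hB t) (sub_pos.2 (self_lt_sinh_iff.2 ht.1)).ne'
  refine antitoneOn_of_hasDerivWithinAt_nonpos (convex_Ioc 0 (13 / 10))
    (fun t ht => (hdiv ht).continuousAt.continuousWithinAt)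
    (fun t ht => (hdiv (interior_subset ht)).hasDerivWithinAt) fun t ht => ?_
  rw [interior_Ioc] at ht
  exact div_nonpos_of_nonpos_of_nonneg
    (sub_nonpos.2 (mul_sinh_sub_self_le_mul_cosh_sub_one ht.1 ht.2.le)) (sq_nonneg _)

lemma le_of_le_one_add_exp_neg {v : ℝ} (hv : v ≤ 1 + exp (-v)) : v ≤ 13 / 10 := by
  by_contra! h
  have h1 : exp (-v) < exp (-(13 / 10)) := exp_lt_exp.2 (by linarith)
  have h2 : 10 / 3 < exp (13 / 10) := by
    have := sum_le_exp_of_nonneg (show (0 : ℝ) ≤ 13 / 10 by norm_num) 4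
    norm_num [Finset.sum_range_succ, Nat.factorial] at this
    linarith
  have h3 : exp (-(13 / 10)) < 3 / 10 := by
    rw [exp_neg, inv_lt_comm₀ (exp_pos _) (by norm_num)]
    norm_num
    linarith
  linarith

noncomputable def regretDerivNumerator (c t : ℝ) : ℝ :=
  t ^ 2 * (1 + exp (-t) - t) - 4 * c * (sinh t - t)

lemma regretDerivNumerator_nonneg_of_le {c u v : ℝ} (hc : 0 ≤ c) (hu : 0 < u) (huv : u ≤ v)
    (hv : 0 ≤ regretDerivNumerator c v) : 0 ≤ regretDerivNumerator c u := by
  have hv0 : 0 < v := hu.trans_le huv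
  have hBu : 0 < sinh u - u := sub_pos.2 (self_lt_sinh_iff.2 hu)
  have hBv : 0 < sinh v - v := sub_pos.2 (self_lt_sinh_iff.2 hv0)
  rw [regretDerivNumerator, sub_nonneg] at hv ⊢
  have hv13 : v ≤ 13 / 10 := by
    refine le_of_le_one_add_exp_neg (sub_nonneg.1 (nonneg_of_mul_nonneg_right ?_ (pow_pos hv0 2)))
    exact (by positivity : 0 ≤ 4 * c * (sinh v - v)).trans hv
  have hratio := antitoneOn_div_sinh_sub_self ⟨hu, huv.trans hv13⟩ ⟨hv0, hv13⟩ huv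
  rw [← le_div_iff₀ hBu]
  exact ((le_div_iff₀ hBv).2 hv).trans hratio

lemma regretR_eq {γ Δ : ℝ} (hγ : γ ≠ 0) (hΔ : Δ ≠ 0) :
    regretR γ Δ =
      Δ / (exp (Δ * γ) + 1) + 2 * γ * ((exp (Δ * γ) - 1) / (Δ * (exp (Δ * γ) + 1))) := by
  rw [regretR, if_neg hγ, exp_neg]
  have hE1 : exp (Δ * γ) - 1 ≠ 0 :=
    sub_ne_zero.2 (by simpa [exp_eq_one_iff] using mul_ne_zero hΔ hγ)
  have hE : exp (Δ * γ) - (exp (Δ * γ))⁻¹ =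
      (exp (Δ * γ) - 1) * (exp (Δ * γ) + 1) / exp (Δ * γ) := by
    field_simp
    ring
  rw [hE]
  field_simp
  ring

lemma hasDerivAt_regretR {γ Δ : ℝ} (hγ : 0 < γ) (hΔ : 0 < Δ) :
    HasDerivAt (regretR γ) (regretDerivNumerator (γ ^ 3) (Δ * γ) *
      (exp (Δ * γ) / ((Δ * γ) ^ 2 * (exp (Δ * γ) + 1) ^ 2))) Δ := by
  have hE : HasDerivAt (fun x => exp (x * γ)) (exp (Δ * γ) * γ) Δ :=
    ((hasDerivAt_id Δ).mul_const γ).exp.congr_deriv (by simp)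
  have h1 := (hasDerivAt_id' Δ).fun_div (hE.add_const 1) (by positivity)
  have h2 := ((hE.sub_const 1).fun_div ((hasDerivAt_id' Δ).fun_mul (hE.add_const 1))
    (by positivity)).const_mul (2 * γ)
  refine ((h1.add h2).congr_deriv ?_).congr_of_eventuallyEq ?_
  · simp only [regretDerivNumerator, sinh_eq, exp_neg]
    field_simp
    ring
  · filter_upwards [Ioi_mem_nhds hΔ] with x hx
    exact regretR_eq hγ.ne' (ne_of_gt hx)

/-- for every fixed `γ ≥ 0`, the map `Δ ↦ R(γ, Δ)` is quasi-concave on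
`(0, ∞)`: every superlevel set `{Δ > 0 : R(γ, Δ) ≥ ν}` is convex. -/
theorem regretR_quasiconcave_in_Delta (γ : ℝ) (hγ : 0 ≤ γ) (ν : ℝ) :
    Convex ℝ {Δ : ℝ | Δ ∈ Set.Ioi (0 : ℝ) ∧ ν ≤ regretR γ Δ} := by
  rcases hγ.eq_or_lt with rfl | hγ
  · have hR : regretR 0 = fun Δ => Δ / 2 := funext fun Δ => if_pos rfl
    rw [hR]
    exact (monotone_id.div_const two_pos.le).monotoneOn _ |>.quasiconcaveOn (convex_Ioi 0) ν
  · refine quasiconcaveOn_of_hasDerivAt_of_nonneg_of_le (convex_Ioi 0)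
      (fun Δ hΔ => hasDerivAt_regretR hγ hΔ) (fun x hx y hy hxy hdy => ?_) ν
    have hx : 0 < x := hx
    have hy : 0 < y := hy
    rw [mul_nonneg_iff_of_pos_right (by positivity)] at hdy ⊢
    exact regretDerivNumerator_nonneg_of_le (by positivity) (by positivity)
      (mul_le_mul_of_nonneg_right hxy hγ.le) hdy
end

section
/- Define f(m) = (2c/Δ²)(1 − 2m)·ln((1−m)/m) + (K/2)·Δ·min{m, 1−m} for m ∈ (0, 1), where c, Δ, K > 0. Then f is symmetric about 1/2, i.e., f(m) = f(1 − m) for all m ∈ (0, 1), f(m) → ∞ as m → 0⁺, and f has exactly two global minimizers on (0,1), of the form α* and 1 − α* for some α* ∈ (0, 1/2). -/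
/-!
Write `A = 2c/Δ²` and `B = KΔ/2`. Replacing `m` by `1 - m` flips the sign of both `1 - 2m` and
`log((1-m)/m)`, which gives the symmetry, and near `0` the objective behaves like `A log(1/m)`.
On `(0, 1/2]` the objective is `A(1-2m) log((1-m)/m) + Bm`, with derivative `B - A s(m)` where
`s(m) = 2 log((1-m)/m) + 1/m - 1/(1-m)`. Since `s' = -(1/m + 1/(1-m))² < 0`, `s(1/2) = 0` and
`s → ∞` at `0⁺`, there is a unique `α ∈ (0, 1/2)` with `A s(α) = B`; the objective strictly
decreases up to `α` and strictly increases after it, so by symmetry its minimizers are exactly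
`α` and `1 - α`.
-/

open Set Filter Topology

theorem setOf_forall_le_eq_pair {α β : Type*} [LinearOrder β] {f : α → β} {s : Set α}
    {a b : α} (ha : a ∈ s) (hb : b ∈ s) (hab : f a = f b) (hlt : ∀ m ∈ s, m ≠ a → m ≠ b → f a < f m) :
    {m | m ∈ s ∧ ∀ m' ∈ s, f m ≤ f m'} = {a, b} := by
  have hmin : ∀ m ∈ s, f a ≤ f m := fun m hm => by
    by_cases hma : m = a
    · rw [hma]
    by_cases hmb : m = b
    · rw [hmb, hab]
    exact (hlt m hm hma hmb).le
  ext m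
  constructor
  · rintro ⟨hm, hle⟩
    by_contra hne
    simp only [mem_insert_iff, mem_singleton_iff, not_or] at hne
    exact (hle a ha).not_gt (hlt m hm hne.1 hne.2)
  · rintro (rfl | rfl)
    · exact ⟨ha, hmin⟩
    · exact ⟨hb, hab ▸ hmin⟩

namespace WaldBoundary

noncomputable def objective (A B m : ℝ) : ℝ :=
  A * (1 - 2 * m) * Real.log ((1 - m) / m) + B * min m (1 - m)

noncomputable def objectiveLeft (A B m : ℝ) : ℝ :=
  A * (1 - 2 * m) * Real.log ((1 - m) / m) + B * m

noncomputable def slope (m : ℝ) : ℝ :=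
  2 * Real.log ((1 - m) / m) + m⁻¹ - (1 - m)⁻¹

theorem objective_one_sub (A B m : ℝ) : objective A B (1 - m) = objective A B m := by
  rw [objective, objective, sub_sub_cancel, ← inv_div, Real.log_inv, min_comm]
  ring

theorem objective_eq_objectiveLeft {A B m : ℝ} (hm : m ≤ 1 / 2) :
    objective A B m = objectiveLeft A B m := by
  rw [objective, objectiveLeft, min_eq_left (by linarith)]

theorem tendsto_log_one_sub_div_self_nhdsGT_zero :
    Tendsto (fun m : ℝ => Real.log ((1 - m) / m)) (𝓝[>] 0) atTop := by
  have h : Tendsto (fun m : ℝ => m⁻¹ + -1) (𝓝[>] 0) atTop :=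
    tendsto_atTop_add_const_right _ _ tendsto_inv_nhdsGT_zero
  refine Real.tendsto_log_atTop.comp (h.congr' ?_)
  filter_upwards [self_mem_nhdsWithin] with m (hm : 0 < m)
  field_simp
  ring

theorem tendsto_objective_nhdsGT_zero {A : ℝ} (hA : 0 < A) (B : ℝ) :
    Tendsto (objective A B) (𝓝[>] 0) atTop := by
  have hcoeff : Tendsto (fun m : ℝ => A * (1 - 2 * m)) (𝓝[>] 0) (𝓝 A) :=
    tendsto_nhdsWithin_of_tendsto_nhds ((by fun_prop : Continuous _).tendsto' 0 A (by simp))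
  have hmin : Tendsto (fun m : ℝ => B * min m (1 - m)) (𝓝[>] 0) (𝓝 0) :=
    tendsto_nhdsWithin_of_tendsto_nhds ((by fun_prop : Continuous _).tendsto' 0 0 (by simp))
  exact (hcoeff.pos_mul_atTop hA tendsto_log_one_sub_div_self_nhdsGT_zero).atTop_add hmin

theorem hasDerivAt_log_one_sub_div_self {m : ℝ} (hm0 : 0 < m) (hm1 : m < 1) :
    HasDerivAt (fun x => Real.log ((1 - x) / x)) (-(m⁻¹ + (1 - m)⁻¹)) m := by
  have hq : HasDerivAt (fun x : ℝ => (1 - x) / x) ((-1 * m - (1 - m) * 1) / m ^ 2) m :=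
    ((hasDerivAt_id' m).const_sub 1).div (hasDerivAt_id' m) hm0.ne'
  refine (hq.log (div_pos (by linarith) hm0).ne').congr_deriv ?_
  have : 1 - m ≠ 0 := by linarith
  field_simp
  ring

theorem hasDerivAt_objectiveLeft (A B : ℝ) {m : ℝ} (hm0 : 0 < m) (hm1 : m < 1) :
    HasDerivAt (objectiveLeft A B) (B - A * slope m) m := by
  have hcoeff : HasDerivAt (fun x : ℝ => A * (1 - 2 * x)) (A * -(2 * 1)) m :=
    (((hasDerivAt_id' m).const_mul 2).const_sub 1).const_mul A
  refine ((hcoeff.mul (hasDerivAt_log_one_sub_div_self hm0 hm1)).add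
    ((hasDerivAt_id' m).const_mul B)).congr_deriv ?_
  have : 1 - m ≠ 0 := by linarith
  rw [slope]
  field_simp
  ring

theorem hasDerivAt_slope {m : ℝ} (hm0 : 0 < m) (hm1 : m < 1) :
    HasDerivAt slope (-(m⁻¹ + (1 - m)⁻¹) ^ 2) m := by
  have hm1' : 1 - m ≠ 0 := by linarith
  have hinv : HasDerivAt (fun x : ℝ => (1 - x)⁻¹) (-(-1) / (1 - m) ^ 2) m :=
    ((hasDerivAt_id' m).const_sub 1).inv hm1'
  refine ((((hasDerivAt_log_one_sub_div_self hm0 hm1).const_mul 2).add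
    (hasDerivAt_inv hm0.ne')).sub hinv).congr_deriv ?_
  field_simp
  ring

theorem strictAntiOn_slope : StrictAntiOn slope (Ioo 0 1) := by
  refine strictAntiOn_of_deriv_neg (convex_Ioo 0 1)
    (fun x hx => (hasDerivAt_slope hx.1 hx.2).continuousAt.continuousWithinAt) ?_
  rw [interior_Ioo]
  intro x hx
  rw [(hasDerivAt_slope hx.1 hx.2).deriv, neg_neg_iff_pos]
  have hx0 := hx.1
  have hx1 : 0 < 1 - x := by linarith [hx.2]
  positivity

theorem slope_one_half : slope (1 / 2) = 0 := by
  norm_num [slope]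

theorem tendsto_slope_nhdsGT_zero : Tendsto slope (𝓝[>] 0) atTop := by
  have h : Tendsto (fun m : ℝ => -(1 - m)⁻¹) (𝓝[>] 0) (𝓝 (-1)) :=
    tendsto_nhdsWithin_of_tendsto_nhds
      ((continuousAt_const.sub continuousAt_id).inv₀ (by norm_num)).neg.tendsto |>.trans (by simp)
  exact ((tendsto_log_one_sub_div_self_nhdsGT_zero.const_mul_atTop two_pos).atTop_add_atTop
    tendsto_inv_nhdsGT_zero).atTop_add h

theorem exists_slope_eq {y : ℝ} (hy : 0 < y) : ∃ α ∈ Ioo (0 : ℝ) (1 / 2), slope α = y := by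
  obtain ⟨m₀, hy_lt, hm₀⟩ := ((tendsto_slope_nhdsGT_zero.eventually_gt_atTop y).and
    (Ioo_mem_nhdsGT (by norm_num : (0 : ℝ) < 1 / 2))).exists
  have hcont : ContinuousOn slope (Icc m₀ (1 / 2)) := fun x hx =>
    (hasDerivAt_slope (hm₀.1.trans_le hx.1) (by linarith [hx.2])).continuousAt.continuousWithinAt
  obtain ⟨α, hα, rfl⟩ := intermediate_value_Icc' hm₀.2.le hcont
    ⟨slope_one_half ▸ hy.le, hy_lt.le⟩
  refine ⟨α, ⟨hm₀.1.trans_le hα.1, hα.2.lt_of_ne ?_⟩, rfl⟩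
  rintro rfl
  exact hy.ne' slope_one_half

theorem strictAntiOn_objectiveLeft {A B α : ℝ} (hA : 0 < A) (hα : A * slope α = B)
    (hα0 : 0 < α) (hα1 : α < 1) : StrictAntiOn (objectiveLeft A B) (Ioc 0 α) := by
  refine strictAntiOn_of_deriv_neg (convex_Ioc 0 α) (fun x hx =>
    (hasDerivAt_objectiveLeft A B hx.1 (hx.2.trans_lt hα1)).continuousAt.continuousWithinAt) ?_
  rw [interior_Ioc]
  intro x hx
  have hx1 : x < 1 := hx.2.trans hα1
  rw [(hasDerivAt_objectiveLeft A B hx.1 hx1).deriv, ← hα, sub_neg]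
  exact mul_lt_mul_of_pos_left (strictAntiOn_slope ⟨hx.1, hx1⟩ ⟨hα0, hα1⟩ hx.2) hA

theorem strictMonoOn_objectiveLeft {A B α : ℝ} (hA : 0 < A) (hα : A * slope α = B)
    (hα0 : 0 < α) (hα1 : α < 1) : StrictMonoOn (objectiveLeft A B) (Ico α 1) := by
  refine strictMonoOn_of_deriv_pos (convex_Ico α 1) (fun x hx =>
    (hasDerivAt_objectiveLeft A B (hα0.trans_le hx.1) hx.2).continuousAt.continuousWithinAt) ?_
  rw [interior_Ico]
  intro x hx
  have hx0 : 0 < x := hα0.trans hx.1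
  rw [(hasDerivAt_objectiveLeft A B hx0 hx.2).deriv, ← hα, sub_pos]
  exact mul_lt_mul_of_pos_left (strictAntiOn_slope ⟨hα0, hα1⟩ ⟨hx0, hx.2⟩ hx.1) hA

theorem objective_lt_of_le_half {A B α m : ℝ} (hA : 0 < A) (hα : A * slope α = B)
    (hα0 : 0 < α) (hαm : α ≤ 1 / 2) (hm0 : 0 < m) (hm : m ≤ 1 / 2) (hne : m ≠ α) :
    objective A B α < objective A B m := by
  have hα1 : α < 1 := by linarith
  rw [objective_eq_objectiveLeft hm, objective_eq_objectiveLeft hαm]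
  rcases hne.lt_or_gt with h | h
  · exact strictAntiOn_objectiveLeft hA hα hα0 hα1 ⟨hm0, h.le⟩ ⟨hα0, le_rfl⟩ h
  · exact strictMonoOn_objectiveLeft hA hα hα0 hα1 ⟨le_rfl, hα1⟩ ⟨h.le, by linarith⟩ h

theorem exists_objective_lt {A B : ℝ} (hA : 0 < A) (hB : 0 < B) :
    ∃ α ∈ Ioo (0 : ℝ) (1 / 2), ∀ m ∈ Ioo (0 : ℝ) 1, m ≠ α → m ≠ 1 - α →
      objective A B α < objective A B m := by
  obtain ⟨α, hα, hslope⟩ := exists_slope_eq (div_pos hB hA)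
  have hAα : A * slope α = B := by rw [hslope, mul_div_cancel₀ _ hA.ne']
  refine ⟨α, hα, fun m hm hmα hmα' => ?_⟩
  have hlt : ∀ {m}, 0 < m → m ≤ 1 / 2 → m ≠ α → objective A B α < objective A B m :=
    fun hm0 hm hne => objective_lt_of_le_half hA hAα hα.1 hα.2.le hm0 hm hne
  rcases le_or_gt m (1 / 2) with h | h
  · exact hlt hm.1 h hmα
  · rw [← objective_one_sub A B m]
    exact hlt (by linarith [hm.2]) (by linarith) fun h' => hmα' (by linarith)

end WaldBoundary

/-- For `c, Δ, K > 0`, the function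
`f(m) = (2c/Δ²)(1 - 2m) ln((1-m)/m) + (K/2) Δ min{m, 1-m}` on `(0,1)`
is symmetric about `1/2`, blows up as `m → 0⁺`, and its set of global minimizers over
`(0,1)` is exactly `{α*, 1 - α*}` for some `α* ∈ (0, 1/2)`. -/
theorem stopping_objective_minimizers
    (c Δ K : ℝ) (hc : 0 < c) (hΔ : 0 < Δ) (hK : 0 < K)
    (f : ℝ → ℝ)
    (hf : ∀ m : ℝ, f m =
      2 * c / Δ ^ 2 * (1 - 2 * m) * Real.log ((1 - m) / m) +
        K / 2 * Δ * min m (1 - m)) :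
    (∀ m ∈ Ioo (0 : ℝ) 1, f m = f (1 - m)) ∧
    Tendsto f (nhdsWithin 0 (Ioi (0 : ℝ))) atTop ∧
    ∃ α : ℝ, α ∈ Ioo (0 : ℝ) (1 / 2) ∧
      {m : ℝ | m ∈ Ioo (0 : ℝ) 1 ∧ ∀ m' ∈ Ioo (0 : ℝ) 1, f m ≤ f m'}
        = {α, 1 - α} := by
  obtain rfl : f = WaldBoundary.objective (2 * c / Δ ^ 2) (K / 2 * Δ) := funext hf
  have hA : 0 < 2 * c / Δ ^ 2 := by positivity
  obtain ⟨α, hα, hlt⟩ := WaldBoundary.exists_objective_lt hA (by positivity : 0 < K / 2 * Δ)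
  refine ⟨fun m _ => (WaldBoundary.objective_one_sub _ _ m).symm,
    WaldBoundary.tendsto_objective_nhdsGT_zero hA _, α, hα, ?_⟩
  have hα1 : α ∈ Ioo (0 : ℝ) 1 := ⟨hα.1, by linarith [hα.2]⟩
  exact setOf_forall_le_eq_pair hα1 ⟨by linarith [hα.2], by linarith [hα.1]⟩
    (WaldBoundary.objective_one_sub _ _ α).symm hlt
end

section
/- Let Y be a real random variable with E[exp|Y|] < ∞, E[Y] = 0 and E[Y²] = σ² < ∞. For h ∈ ℝ fixed and n ∈ ℕ, define g_n(Y) = hY/√n − h²σ²/(2n). Then E[exp(g_n(Y))] = 1 + O(n^{−c}) for every c < 3/2; in particular, |E[exp(hY/√n − h²σ²/(2n))] − 1| ≤ L·n^{−c} for some constant L depending only on h, σ², and E[exp|Y|]. -/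
/-!
Since `E[exp |Y|] < ∞`, the moment generating function `M` of `Y` is analytic near `0`, and its
Taylor expansion reads `M t = 1 + σ² t² / 2 + O(t³)`. As `exp (σ² t² / 2) = 1 + σ² t² / 2 + O(t⁴)`,
this gives `exp (-σ² t² / 2) * M t = 1 + O(t³)`, which at `t = h / √n` is `1 + O(n^(-3/2))`;
the finitely many small `n` only affect the constant.
-/

open MeasureTheory ProbabilityTheory Filter Asymptotics Topology Real

lemma Real.isBigO_exp_sub_one_sub_id :
    (fun x : ℝ => exp x - 1 - x) =O[𝓝 0] fun x => x ^ 2 := by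
  refine IsBigO.of_bound 1 ?_
  filter_upwards [Metric.closedBall_mem_nhds (0 : ℝ) one_pos] with x hx
  rw [one_mul, norm_pow]
  exact Real.norm_exp_sub_one_sub_id_le (by simpa using hx)

namespace ProbabilityTheory
variable {Ω : Type*} {m : MeasurableSpace Ω} {X : Ω → ℝ} {μ : Measure Ω}

lemma zero_mem_interior_integrableExpSet_of_integrable_exp_abs (hX : AEMeasurable X μ)
    (h : Integrable (fun ω => exp |X ω|) μ) : 0 ∈ interior (integrableExpSet X μ) := by
  refine mem_interior.2 ⟨Set.Ioo (-1) 1, fun t ht => ?_, isOpen_Ioo, by norm_num⟩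
  refine h.mono (by fun_prop) (ae_of_all _ fun ω => ?_)
  simp only [norm_eq_abs, abs_exp, exp_le_exp]
  calc t * X ω ≤ |t| * |X ω| := (le_abs_self _).trans (abs_mul _ _).le
    _ ≤ 1 * |X ω| := by gcongr; exact (abs_lt.2 ht).le
    _ = |X ω| := one_mul _

lemma integral_exp_mul_sub (t s : ℝ) :
    ∫ ω, exp (t * X ω - s) ∂μ = exp (-s) * mgf X μ t := by
  simp only [mgf, sub_eq_neg_add, exp_add, integral_const_mul]

variable [IsProbabilityMeasure μ]

lemma isBigO_mgf_sub_taylor (h0 : 0 ∈ interior (integrableExpSet X μ)) :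
    (fun t => mgf X μ t - (1 + t * μ[X] + t ^ 2 * (∫ ω, X ω ^ 2 ∂μ) / 2))
      =O[𝓝 0] fun t => |t| ^ 3 := by
  have := (hasFPowerSeriesAt_mgf h0).isBigO_sub_partialSum_pow 3
  simp only [FormalMultilinearSeries.partialSum, Finset.sum_range_succ] at this
  simpa [mul_div_assoc] using this

lemma isBigO_exp_neg_mul_mgf_sub_one (h0 : 0 ∈ interior (integrableExpSet X μ))
    (hmean : μ[X] = 0) :
    (fun t => exp (-(t ^ 2 * (∫ ω, X ω ^ 2 ∂μ) / 2)) * mgf X μ t - 1)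
      =O[𝓝 0] fun t => |t| ^ 3 := by
  set u : ℝ → ℝ := fun t => t ^ 2 * (∫ ω, X ω ^ 2 ∂μ) / 2 with hu_def
  have hu : Tendsto u (𝓝 0) (𝓝 0) := by
    have hcont : Continuous u := by fun_prop
    simpa [hu_def] using hcont.tendsto 0
  have hmgf : (fun t => mgf X μ t - (1 + u t)) =O[𝓝 0] fun t => |t| ^ 3 := by
    simpa [hmean, hu_def] using isBigO_mgf_sub_taylor h0
  have hexp : (fun t => exp (u t) - 1 - u t) =O[𝓝 0] fun t => |t| ^ 3 := by
    refine (Real.isBigO_exp_sub_one_sub_id.comp_tendsto hu).trans ?_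
    have h4 : (fun t : ℝ => t ^ 4) =O[𝓝 0] fun t => |t| ^ 3 := by
      simpa only [norm_pow, Real.norm_eq_abs] using
        ((isLittleO_pow_pow (𝕜 := ℝ) (by norm_num : 3 < 4)).isBigO.norm_right)
    refine (h4.const_mul_left ((∫ ω, X ω ^ 2 ∂μ) ^ 2 / 4)).congr_left fun t => ?_
    simp only [Function.comp_apply, hu_def]
    ring
  have hbdd : (fun t => exp (-u t)) =O[𝓝 0] fun _ => (1 : ℝ) :=
    ((Real.continuous_exp.tendsto _).comp hu.neg).isBigO_one ℝ
  -- `exp (-u) * M - 1 = exp (-u) * ((M - (1 + u)) - (exp u - 1 - u))`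
  refine ((hbdd.mul (hmgf.sub hexp)).congr_left fun t => ?_).congr_right (by simp)
  have : exp (-u t) * exp (u t) = 1 := by rw [← exp_add, neg_add_cancel, exp_zero]
  simp only [hu_def] at this ⊢
  linear_combination -this

end ProbabilityTheory

lemma isBigO_abs_div_sqrt_pow_three_rpow_neg (h : ℝ) {c : ℝ} (hc : c ≤ 3 / 2) :
    (fun n : ℕ => |h / √n| ^ 3) =O[atTop] fun n : ℕ => (n : ℝ) ^ (-c) := by
  refine IsBigO.of_bound (|h| ^ 3) ?_
  filter_upwards [eventually_ge_atTop 1] with n hn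
  have hn' : (1 : ℝ) ≤ n := by exact_mod_cast hn
  have hsqrt : √(n : ℝ) ^ 3 = (n : ℝ) ^ (3 / 2 : ℝ) := by
    rw [sqrt_eq_rpow, ← rpow_natCast, ← rpow_mul (by positivity)]
    norm_num
  rw [norm_pow, Real.norm_eq_abs, abs_abs, abs_div, abs_of_nonneg (sqrt_nonneg _), div_pow, hsqrt,
    Real.norm_of_nonneg (by positivity), div_eq_mul_inv, ← rpow_neg (by positivity)]
  exact mul_le_mul_of_nonneg_left (rpow_le_rpow_of_exponent_le hn' (by linarith)) (by positivity)

/-- if `Y` has `E[exp|Y|] < ∞`, `E[Y] = 0` and `E[Y²] = σ²`, then for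
every `c < 3/2` there is a constant `L` with
`|E[exp(hY/√n - h²σ²/(2n))] - 1| ≤ L n^{-c}` for all `n ≥ 1`. -/
theorem normalization_constant_bound
    {Ω : Type*} [MeasureSpace Ω] [IsProbabilityMeasure (ℙ : Measure Ω)]
    (Y : Ω → ℝ) (hYmeas : Measurable Y)
    (hexp : Integrable (fun ω => Real.exp |Y ω|) ℙ)
    (σ2 : ℝ)
    (hmean : ∫ ω, Y ω ∂ℙ = 0)
    (hvar : ∫ ω, (Y ω) ^ 2 ∂ℙ = σ2)
    (h : ℝ) (c : ℝ) (hc : c < 3 / 2) :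
    ∃ L : ℝ, ∀ n : ℕ, 1 ≤ n →
      |(∫ ω, Real.exp (h * Y ω / Real.sqrt n - h ^ 2 * σ2 / (2 * n)) ∂ℙ) - 1|
        ≤ L * (n : ℝ) ^ (-c) := by
  have h0 := zero_mem_interior_integrableExpSet_of_integrable_exp_abs hYmeas.aemeasurable hexp
  have hG := isBigO_exp_neg_mul_mgf_sub_one h0 hmean
  rw [hvar] at hG
  have ht : Tendsto (fun n : ℕ => h / √n) atTop (𝓝 0) :=
    tendsto_const_nhds.div_atTop (tendsto_sqrt_atTop.comp tendsto_natCast_atTop_atTop)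
  obtain ⟨L, -, hL⟩ := bound_of_isBigO_nat_atTop
    ((hG.comp_tendsto ht).trans (isBigO_abs_div_sqrt_pow_three_rpow_neg h hc.le))
  refine ⟨L, fun n hn => ?_⟩
  have hn' : (0 : ℝ) < n := by exact_mod_cast hn
  have hrate := hL (rpow_pos_of_pos hn' (-c)).ne'
  have hsq : (h / √n) ^ 2 = h ^ 2 / n := by rw [div_pow, sq_sqrt hn'.le]
  have hexpo (ω : Ω) :
      h * Y ω / √n - h ^ 2 * σ2 / (2 * n) = h / √n * Y ω - (h / √n) ^ 2 * σ2 / 2 := by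
    rw [hsq]; ring
  simp only [hexpo, integral_exp_mul_sub]
  simpa [Real.norm_of_nonneg (rpow_pos_of_pos hn' (-c)).le] using hrate
end
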